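/- (Lemma 1, fermionic TRS for Grover determinants) Let U be an n×n unitary matrix. For i = 1,…,r, let G_i^↑ be invertible n×n complex matrices with I - G_i^↑ invertible, and set G_i^↓ = U† (I - G_i^↑)† U. Assume all the matrices appearing are invertible as needed. Define for σ ∈ {↑,↓} the Grover determinant det g_r^σ = det[ ∏_{i=r}^{1} G_i^σ · ( I + ∏_{i=r}^{1} ((G_i^σ)^{-1} - I) ) ]. Then det g_r^↓ = conj(det g_r^↑). -/

import Mathlib

open Matrix

/-- Product of matrices in decreasing index order: `G (r-1) * ⋯ * G 0`. -/
noncomputable def prodDesc {n : Type*} [Fintype n] [DecidableEq n] {r : ℕ}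
    (G : Fin r → Matrix n n ℂ) : Matrix n n ℂ :=
  ((List.finRange r).reverse.map G).prod

/-- Grover determinant `det[∏ᵢ Gᵢ (I + ∏ᵢ (Gᵢ⁻¹ - I))]` (products in decreasing order). -/
noncomputable def groverDet {n : Type*} [Fintype n] [DecidableEq n] {r : ℕ}
    (G : Fin r → Matrix n n ℂ) : ℂ :=
  (prodDesc G * (1 + prodDesc (fun i => (G i)⁻¹ - 1))).det

/-!
Write `Fᵢ = Gᵢ⁻¹ - 1` and `Q = ∏ Fᵢ`, so that `det g = ∏ det Gᵢ · det (1 + Q)`. The spin-down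
factors are `Gᵢ↓⁻¹ - 1 = θ Fᵢ` for `θ X = U† (X⁻¹)† U`, which is multiplicative; hence the
spin-down product is `θ Q` and `det g↓ = conj (∏ det (1 - Gᵢ) · det (1 + Q⁻¹))`. Finally
`det (1 - Gᵢ) = det Gᵢ · det Fᵢ` and `det Q · det (1 + Q⁻¹) = det (1 + Q)`.
-/

namespace Matrix

variable {n α : Type*} [Fintype n] [DecidableEq n] [CommRing α]

theorem mul_nonsing_inv_sub_one {G : Matrix n n α} (hG : IsUnit G.det) :
    G * (G⁻¹ - 1) = 1 - G := by
  rw [Matrix.mul_sub, mul_nonsing_inv _ hG, Matrix.mul_one]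

theorem det_mul_det_one_add_nonsing_inv {Q : Matrix n n α} (hQ : IsUnit Q.det) :
    Q.det * (1 + Q⁻¹).det = (1 + Q).det := by
  rw [← det_mul, Matrix.mul_add, mul_nonsing_inv _ hQ, Matrix.mul_one, add_comm]

variable [StarRing α] {U : Matrix n n α}

theorem det_conjTranspose_mul_mul (hU : U * Uᴴ = 1) (X : Matrix n n α) :
    (Uᴴ * X * U).det = X.det := by
  rw [← inv_eq_right_inv hU]
  exact det_conj' (IsUnit.of_mul_eq_one Uᴴ hU) X

theorem nonsing_inv_conjTranspose_mul_mul (hU : U * Uᴴ = 1) (X : Matrix n n α) :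
    (Uᴴ * X * U)⁻¹ = Uᴴ * X⁻¹ * U := by
  rw [mul_inv_rev, mul_inv_rev, inv_eq_right_inv hU, inv_eq_left_inv hU, Matrix.mul_assoc]

/-- Multiplicative because the inverse and the conjugate transpose both reverse products. -/
noncomputable def timeReversal (U : Matrix n n α) (hU : U * Uᴴ = 1) :
    Matrix n n α →* Matrix n n α where
  toFun X := Uᴴ * X⁻¹ᴴ * U
  map_one' := by rw [inv_one, conjTranspose_one, Matrix.mul_one, mul_eq_one_comm.mp hU]
  map_mul' A B := by
    rw [mul_inv_rev, conjTranspose_mul]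
    calc Uᴴ * (A⁻¹ᴴ * B⁻¹ᴴ) * U = Uᴴ * A⁻¹ᴴ * (U * Uᴴ) * B⁻¹ᴴ * U := by
          rw [hU]; simp only [Matrix.mul_one, Matrix.mul_assoc]
      _ = Uᴴ * A⁻¹ᴴ * U * (Uᴴ * B⁻¹ᴴ * U) := by simp only [Matrix.mul_assoc]

theorem timeReversal_apply (hU : U * Uᴴ = 1) (X : Matrix n n α) :
    timeReversal U hU X = Uᴴ * X⁻¹ᴴ * U := rfl

theorem one_add_timeReversal (hU : U * Uᴴ = 1) (X : Matrix n n α) :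
    1 + timeReversal U hU X = Uᴴ * (1 + X⁻¹)ᴴ * U := by
  rw [timeReversal_apply, conjTranspose_add, conjTranspose_one, Matrix.mul_add, Matrix.add_mul,
    Matrix.mul_one, mul_eq_one_comm.mp hU]

theorem nonsing_inv_conjTranspose_one_sub_sub_one (hU : U * Uᴴ = 1) {G : Matrix n n α}
    (hG : IsUnit G.det) (hG' : IsUnit (1 - G).det) :
    (Uᴴ * (1 - G)ᴴ * U)⁻¹ - 1 = timeReversal U hU (G⁻¹ - 1) := by
  have hinv : (G⁻¹ - 1)⁻¹ = (1 - G)⁻¹ - 1 := by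
    calc (G⁻¹ - 1)⁻¹ = (1 - G)⁻¹ * G := inv_eq_left_inv <| by
          rw [Matrix.mul_assoc, mul_nonsing_inv_sub_one hG, nonsing_inv_mul _ hG']
      _ = (1 - G)⁻¹ * (1 - (1 - G)) := by rw [sub_sub_cancel]
      _ = (1 - G)⁻¹ - 1 := by rw [Matrix.mul_sub, Matrix.mul_one, nonsing_inv_mul _ hG']
  rw [timeReversal_apply, hinv, nonsing_inv_conjTranspose_mul_mul hU, ← conjTranspose_nonsing_inv,
    conjTranspose_sub, conjTranspose_one, Matrix.mul_sub, Matrix.sub_mul, Matrix.mul_one,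
    mul_eq_one_comm.mp hU]

end Matrix

section Grover

variable {n : Type*} [Fintype n] [DecidableEq n] {r : ℕ}

theorem prodDesc_map (φ : Matrix n n ℂ →* Matrix n n ℂ) (F : Fin r → Matrix n n ℂ) :
    prodDesc (fun i => φ (F i)) = φ (prodDesc F) := by
  rw [prodDesc, prodDesc, map_list_prod, List.map_map]
  rfl

theorem det_prodDesc (F : Fin r → Matrix n n ℂ) : (prodDesc F).det = ∏ i, (F i).det := by
  rw [prodDesc, ← coe_detMonoidHom, map_list_prod, List.map_map, List.map_reverse,
    List.prod_reverse, ← Fin.prod_univ_def]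
  rfl

theorem groverDet_eq (G : Fin r → Matrix n n ℂ) :
    groverDet G = (∏ i, (G i).det) * (1 + prodDesc (fun i => (G i)⁻¹ - 1)).det := by
  rw [groverDet, det_mul, det_prodDesc]

end Grover

/-- Lemma 1 (fermionic TRS for Grover determinants): if `Gᵢ↓ = U† (I - Gᵢ↑)† U` with `U`
unitary, then the spin-down Grover determinant is the complex conjugate of the spin-up
one. -/
theorem grover_det_conj {n : Type*} [Fintype n] [DecidableEq n]
    (r : ℕ) (U : Matrix n n ℂ) (hU : U * Uᴴ = 1)
    (Gup : Fin r → Matrix n n ℂ)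
    (hG : ∀ i, IsUnit (Gup i)) (hG' : ∀ i, IsUnit (1 - Gup i))
    (Gdn : Fin r → Matrix n n ℂ)
    (hGdn : ∀ i, Gdn i = Uᴴ * (1 - Gup i)ᴴ * U) :
    groverDet Gdn = (starRingEnd ℂ) (groverDet Gup) := by
  set F : Fin r → Matrix n n ℂ := fun i => (Gup i)⁻¹ - 1
  have hdetG : ∀ i, IsUnit (Gup i).det := fun i => (isUnit_iff_isUnit_det _).mp (hG i)
  have hdetG' : ∀ i, IsUnit (1 - Gup i).det := fun i => (isUnit_iff_isUnit_det _).mp (hG' i)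
  have hdet_one_sub : ∀ i, (Gup i).det * (F i).det = (1 - Gup i).det := fun i => by
    rw [← det_mul, mul_nonsing_inv_sub_one (hdetG i)]
  have hQ : IsUnit (prodDesc F).det := by
    rw [det_prodDesc]
    exact IsUnit.prod_univ_iff.mpr fun i =>
      isUnit_of_mul_isUnit_right ((hdet_one_sub i).symm ▸ hdetG' i)
  have hFdn : (fun i => (Gdn i)⁻¹ - 1) = fun i => timeReversal U hU (F i) := funext fun i => by
    rw [hGdn, nonsing_inv_conjTranspose_one_sub_sub_one hU (hdetG i) (hdetG' i)]
  calc groverDet Gdn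
      = star ((∏ i, (1 - Gup i).det) * (1 + (prodDesc F)⁻¹).det) := by
        rw [groverDet_eq, hFdn, prodDesc_map, one_add_timeReversal, det_conjTranspose_mul_mul hU,
          det_conjTranspose, star_mul, star_prod, mul_comm]
        simp only [hGdn, det_conjTranspose_mul_mul hU, det_conjTranspose]
    _ = star ((∏ i, (Gup i).det) * ((prodDesc F).det * (1 + (prodDesc F)⁻¹).det)) := by
        simp only [← hdet_one_sub, Finset.prod_mul_distrib, det_prodDesc, mul_assoc]
    _ = starRingEnd ℂ (groverDet Gup) := by
        rw [det_mul_det_one_add_nonsing_inv hQ, groverDet_eq, add_comm, starRingEnd_apply]
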